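/- arXiv:2209.13326 — 7 statements merged into one kernel-verified Lean document; each statement's English description precedes it below -/
import Mathlib

section
/- If x_R is an optimizer of the continuous relaxation min{ f(x) : A x = b, E x ≤ f₀, x ∈ ℝⁿ } with optimal value z_R and Lagrange multipliers λ_A (for A x = b) and λ_E ≥ 0 (for E x ≤ f₀) satisfying the KKT conditions, and if ρ > ‖λ_A‖, then every x with E x ≤ f₀ and f(x) + ρ‖A x − b‖ ≤ z_IP satisfies ‖A x − b‖ ≤ (z_IP − z_R)/(ρ − ‖λ_A‖). -/
open scoped RealInnerProductSpace Matrix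

/-!
By the first-order convexity inequality at `x_R` and stationarity,
`f x ≥ z_R + ⟪λ_A, A x - b⟫ - λ_E ⬝ᵥ (E x - E x_R)`, and complementary slackness with
`λ_E ≥ 0` gives `λ_E ⬝ᵥ (E x - E x_R) ≤ 0` wherever `E x ≤ f₀`. Cauchy–Schwarz then gives
`f x ≥ z_R - ‖λ_A‖ ‖A x - b‖`, which together with `f x + ρ ‖A x - b‖ ≤ z_IP` is the bound.
-/

/-- Reinterpret a plain vector as an element of Euclidean space. -/
def toEuc {m : ℕ} (v : Fin m → ℝ) : EuclideanSpace ℝ (Fin m) := WithLp.toLp 2 v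

lemma inner_toEuc_right {m : ℕ} (u : EuclideanSpace ℝ (Fin m)) (v : Fin m → ℝ) :
    ⟪u, toEuc v⟫ = u ⬝ᵥ v := by
  simp [toEuc, PiLp.inner_apply, dotProduct, mul_comm]

lemma inner_toEuc_mulVec_transpose {m n : ℕ} (A : Matrix (Fin m) (Fin n) ℝ) (l : Fin m → ℝ)
    (v : EuclideanSpace ℝ (Fin n)) : ⟪toEuc (Aᵀ *ᵥ l), v⟫ = l ⬝ᵥ (A *ᵥ v) := by
  rw [real_inner_comm, inner_toEuc_right, Matrix.mulVec_transpose, dotProduct_comm,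
    Matrix.dotProduct_mulVec]

lemma dotProduct_le_of_complementary_slackness {ι : Type*} [Fintype ι] {lam u w c : ι → ℝ}
    (hlam : 0 ≤ lam) (hu : u ≤ c) (hcomp : lam ⬝ᵥ (c - w) = 0) : lam ⬝ᵥ u ≤ lam ⬝ᵥ w := by
  rw [dotProduct_sub, sub_eq_zero] at hcomp
  exact hcomp ▸ dotProduct_le_dotProduct_of_nonneg_left hu hlam

theorem add_inner_le_of_kkt {n m p : ℕ}
    {f : EuclideanSpace ℝ (Fin n) → ℝ} {g : EuclideanSpace ℝ (Fin n) → EuclideanSpace ℝ (Fin n)}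
    (hconv : ∀ x y : EuclideanSpace ℝ (Fin n), f x + ⟪g x, y - x⟫ ≤ f y)
    {A : Matrix (Fin m) (Fin n) ℝ} {E : Matrix (Fin p) (Fin n) ℝ}
    {b : EuclideanSpace ℝ (Fin m)} {f₀ : Fin p → ℝ} {xR : EuclideanSpace ℝ (Fin n)}
    {lamA : EuclideanSpace ℝ (Fin m)} {lamE : Fin p → ℝ}
    (hfeasA : toEuc (A *ᵥ xR) = b)
    (hstat : g xR = toEuc (Aᵀ *ᵥ lamA) - toEuc (Eᵀ *ᵥ lamE))
    (hcompE : lamE ⬝ᵥ (f₀ - E *ᵥ xR) = 0) (hlamE : 0 ≤ lamE)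
    {x : EuclideanSpace ℝ (Fin n)} (hx : E *ᵥ x ≤ f₀) :
    f xR + ⟪lamA, toEuc (A *ᵥ x) - b⟫ ≤ f x := by
  have hE : lamE ⬝ᵥ (E *ᵥ x) ≤ lamE ⬝ᵥ (E *ᵥ xR) :=
    dotProduct_le_of_complementary_slackness hlamE hx hcompE
  have hA : ⟪lamA, toEuc (A *ᵥ x) - b⟫ = lamA ⬝ᵥ (A *ᵥ x) - lamA ⬝ᵥ (A *ᵥ xR) := by
    rw [← hfeasA, inner_sub_right, inner_toEuc_right, inner_toEuc_right]
  have hgrad : ⟪g xR, x - xR⟫ = ⟪lamA, toEuc (A *ᵥ x) - b⟫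
      - (lamE ⬝ᵥ (E *ᵥ x) - lamE ⬝ᵥ (E *ᵥ xR)) := by
    rw [hstat, inner_sub_left, inner_toEuc_mulVec_transpose, inner_toEuc_mulVec_transpose, hA]
    simp [Matrix.mulVec_sub, dotProduct_sub]
  linarith [hconv xR x]

theorem constraint_violation_bound_general
    {n m p : ℕ}
    (f : EuclideanSpace ℝ (Fin n) → ℝ) (g : EuclideanSpace ℝ (Fin n) → EuclideanSpace ℝ (Fin n))
    -- convexity and differentiability of `f`, with gradient `g` (first-order condition)
    (hconv : ∀ x y : EuclideanSpace ℝ (Fin n), f x + ⟪g x, y - x⟫ ≤ f y)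
    (A : Matrix (Fin m) (Fin n) ℝ) (E : Matrix (Fin p) (Fin n) ℝ)
    (b : EuclideanSpace ℝ (Fin m)) (f₀ : Fin p → ℝ)
    (xR : EuclideanSpace ℝ (Fin n)) (zR zIP : ℝ)
    (lamA : EuclideanSpace ℝ (Fin m)) (lamE : Fin p → ℝ)
    -- feasibility of `x_R` and its optimal value
    (hfeasA : toEuc (A.mulVec xR) = b)
    (hval : f xR = zR)
    -- KKT conditions at `x_R`
    (hstat : g xR = toEuc (A.transpose.mulVec lamA) - toEuc (E.transpose.mulVec lamE))
    (hcompE : lamE ⬝ᵥ (f₀ - E.mulVec xR) = 0)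
    (hlamE : ∀ i, 0 ≤ lamE i)
    (ρ : ℝ) (hρ : ‖lamA‖ < ρ) :
    ∀ x : EuclideanSpace ℝ (Fin n), (∀ i, E.mulVec x i ≤ f₀ i) →
      f x + ρ * ‖toEuc (A.mulVec x) - b‖ ≤ zIP →
      ‖toEuc (A.mulVec x) - b‖ ≤ (zIP - zR) / (ρ - ‖lamA‖) := by
  intro x hx hpen
  have hlow := add_inner_le_of_kkt hconv hfeasA hstat hcompE hlamE hx
  have hcauchy := neg_le_of_abs_le (abs_real_inner_le_norm lamA (toEuc (A *ᵥ x) - b))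
  rw [le_div_iff₀ (sub_pos.2 hρ)]
  nlinarith

/-- Proposition 2 of the paper, first part.
If `x_R` optimizes the continuous relaxation `min{f(x) : A x = b, E x ≤ f₀}` with value
`z_R` and KKT multipliers `λ_A`, `λ_E ≥ 0`, and `ρ > ‖λ_A‖`, then every `x` with
`E x ≤ f₀` and `f(x) + ρ‖A x − b‖ ≤ z_IP` satisfies
`‖A x − b‖ ≤ (z_IP − z_R)/(ρ − ‖λ_A‖)`. -/
theorem constraint_violation_bound
    {n m p : ℕ}
    (f : EuclideanSpace ℝ (Fin n) → ℝ) (g : EuclideanSpace ℝ (Fin n) → EuclideanSpace ℝ (Fin n))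
    -- convexity and differentiability of `f`, with gradient `g` (first-order condition)
    (hconv : ∀ x y : EuclideanSpace ℝ (Fin n), f x + ⟪g x, y - x⟫ ≤ f y)
    (A : Matrix (Fin m) (Fin n) ℝ) (E : Matrix (Fin p) (Fin n) ℝ)
    (b : EuclideanSpace ℝ (Fin m)) (f₀ : Fin p → ℝ)
    (xR : EuclideanSpace ℝ (Fin n)) (zR zIP : ℝ)
    (lamA : EuclideanSpace ℝ (Fin m)) (lamE : Fin p → ℝ)
    -- feasibility of `x_R` and its optimal value
    (hfeasA : toEuc (A.mulVec xR) = b)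
    (hfeasE : ∀ i, E.mulVec xR i ≤ f₀ i)
    (hval : f xR = zR)
    -- KKT conditions at `x_R`
    (hstat : g xR = toEuc (A.transpose.mulVec lamA) - toEuc (E.transpose.mulVec lamE))
    (hcompE : lamE ⬝ᵥ (f₀ - E.mulVec xR) = 0)
    (hcompA : lamA ⬝ᵥ (toEuc (A.mulVec xR) - b) = 0)
    (hlamE : ∀ i, 0 ≤ lamE i)
    (hzIP : zR ≤ zIP)
    (ρ : ℝ) (hρ : ‖lamA‖ < ρ) :
    ∀ x : EuclideanSpace ℝ (Fin n), (∀ i, E.mulVec x i ≤ f₀ i) →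
      f x + ρ * ‖toEuc (A.mulVec x) - b‖ ≤ zIP →
      ‖toEuc (A.mulVec x) - b‖ ≤ (zIP - zR) / (ρ - ‖lamA‖) :=
  constraint_violation_bound_general f g hconv A E b f₀ xR zR zIP lamA lamE hfeasA hval hstat hcompE
    hlamE ρ hρ
end

section
/- Under the KKT assumptions at a relaxation optimizer x_R with multipliers λ_A, λ_E ≥ 0, for every x with A x = b + u and E x ≤ f₀ and f(x) ≤ z_IP, one has f(x) ≥ z_R − ‖λ_A‖·‖u‖; in particular the value function φ(u) = inf{ f(x) : A x = b + u, E x ≤ f₀, x ∈ X } is bounded below (> −∞) for every u for which the feasible set is nonempty. -/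
/-!
Convexity at `x_R` and stationarity give
`f x ≥ f x_R + λ_A ⬝ A (x - x_R) - λ_E ⬝ E (x - x_R)`. For `A x = b + u` the middle term is
`⟪λ_A, u⟫ ≥ -‖λ_A‖ ‖u‖` (Cauchy–Schwarz), and complementary slackness turns the last one into
`λ_E ⬝ (f₀ - E x) ≥ 0`. The resulting bound does not depend on `x`, so it also bounds the value
function below.
-/

open scoped RealInnerProductSpace Matrix

section KKT

variable {ι κ μ : Type*} [Fintype ι] [Fintype κ] [Fintype μ]

theorem inner_toLp_transpose_mulVec (A : Matrix κ ι ℝ) (w : κ → ℝ) (v : EuclideanSpace ℝ ι) :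
    ⟪WithLp.toLp 2 (Aᵀ *ᵥ w), v⟫ = w ⬝ᵥ (A *ᵥ v) := by
  rw [EuclideanSpace.inner_eq_star_dotProduct, star_trivial, WithLp.ofLp_toLp, dotProduct_comm,
    Matrix.mulVec_transpose, Matrix.dotProduct_mulVec]

theorem dotProduct_sub_nonpos_of_complementary {w y z c : μ → ℝ} (hw : 0 ≤ w) (hy : y ≤ c)
    (hslack : w ⬝ᵥ (c - z) = 0) : w ⬝ᵥ (y - z) ≤ 0 := by
  calc w ⬝ᵥ (y - z) = w ⬝ᵥ (y - c) + w ⬝ᵥ (c - z) := by rw [← dotProduct_add, sub_add_sub_cancel]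
    _ = w ⬝ᵥ (y - c) := by rw [hslack, add_zero]
    _ ≤ w ⬝ᵥ 0 := dotProduct_le_dotProduct_of_nonneg_left (sub_nonpos.2 hy) hw
    _ = 0 := dotProduct_zero w

theorem add_inner_le_of_kkt_s2 {f : EuclideanSpace ℝ ι → ℝ} {A : Matrix κ ι ℝ} {E : Matrix μ ι ℝ}
    {xR x : EuclideanSpace ℝ ι} {b u lamA : EuclideanSpace ℝ κ} {f₀ lamE : μ → ℝ}
    (hsubgrad : f xR + ⟪WithLp.toLp 2 (Aᵀ *ᵥ lamA) - WithLp.toLp 2 (Eᵀ *ᵥ lamE), x - xR⟫ ≤ f x)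
    (hAxR : WithLp.toLp 2 (A *ᵥ xR) = b) (hAx : WithLp.toLp 2 (A *ᵥ x) = b + u)
    (hEx : E *ᵥ x ≤ f₀) (hslack : lamE ⬝ᵥ (f₀ - E *ᵥ xR) = 0) (hlamE : 0 ≤ lamE) :
    f xR + ⟪lamA, u⟫ ≤ f x := by
  have hAdiff : A *ᵥ (x - xR : EuclideanSpace ℝ ι) = u := by
    rw [WithLp.ofLp_sub, Matrix.mulVec_sub, ← WithLp.ofLp_toLp 2 (A *ᵥ x),
      ← WithLp.ofLp_toLp 2 (A *ᵥ xR), hAx, hAxR, WithLp.ofLp_add, add_sub_cancel_left]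
  have hAterm : ⟪WithLp.toLp 2 (Aᵀ *ᵥ lamA), x - xR⟫ = ⟪lamA, u⟫ := by
    rw [inner_toLp_transpose_mulVec, hAdiff, EuclideanSpace.inner_eq_star_dotProduct, star_trivial,
      dotProduct_comm]
  have hEterm : ⟪WithLp.toLp 2 (Eᵀ *ᵥ lamE), x - xR⟫ ≤ 0 := by
    rw [inner_toLp_transpose_mulVec, WithLp.ofLp_sub, Matrix.mulVec_sub]
    exact dotProduct_sub_nonpos_of_complementary hlamE hEx hslack
  rw [inner_sub_left, hAterm] at hsubgrad
  linarith

end KKT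

theorem value_function_bounded_below_general
    {n m p : ℕ}
    (f : EuclideanSpace ℝ (Fin n) → ℝ) (g : EuclideanSpace ℝ (Fin n) → EuclideanSpace ℝ (Fin n))
    (hconv : ∀ x y : EuclideanSpace ℝ (Fin n), f x + ⟪g x, y - x⟫ ≤ f y)
    (A : Matrix (Fin m) (Fin n) ℝ) (E : Matrix (Fin p) (Fin n) ℝ)
    (b : EuclideanSpace ℝ (Fin m)) (f₀ : Fin p → ℝ)
    (X : Set (EuclideanSpace ℝ (Fin n)))
    (hX : ∀ x ∈ X, ∀ i, E.mulVec x i ≤ f₀ i)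
    (xR : EuclideanSpace ℝ (Fin n)) (zR zIP : ℝ)
    (lamA : EuclideanSpace ℝ (Fin m)) (lamE : Fin p → ℝ)
    (hfeasA : toEuc (A.mulVec xR) = b)
    (hval : f xR = zR)
    (hstat : g xR = toEuc (A.transpose.mulVec lamA) - toEuc (E.transpose.mulVec lamE))
    (hcompE : lamE ⬝ᵥ (f₀ - E.mulVec xR) = 0)
    (hlamE : ∀ i, 0 ≤ lamE i) :
    (∀ (x : EuclideanSpace ℝ (Fin n)) (u : EuclideanSpace ℝ (Fin m)),
        toEuc (A.mulVec x) = b + u → (∀ i, E.mulVec x i ≤ f₀ i) → f x ≤ zIP →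
        zR - ‖lamA‖ * ‖u‖ ≤ f x) ∧
    (∀ u : EuclideanSpace ℝ (Fin m),
        (∃ x ∈ X, toEuc (A.mulVec x) = b + u) →
        BddBelow {w : ℝ | ∃ x ∈ X, toEuc (A.mulVec x) = b + u ∧ w = f x}) := by
  have bound : ∀ (x : EuclideanSpace ℝ (Fin n)) (u : EuclideanSpace ℝ (Fin m)),
      toEuc (A *ᵥ x) = b + u → (∀ i, (E *ᵥ x) i ≤ f₀ i) →
      zR - ‖lamA‖ * ‖u‖ ≤ f x := by
    intro x u hAx hEx
    have hsubgrad := hstat ▸ hconv xR x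
    have hlagr := add_inner_le_of_kkt_s2 hsubgrad hfeasA hAx hEx hcompE hlamE
    linarith [neg_le_of_abs_le (abs_real_inner_le_norm lamA u)]
  refine ⟨fun x u hAx hEx _ => bound x u hAx hEx, fun u _ => ⟨zR - ‖lamA‖ * ‖u‖, ?_⟩⟩
  rintro w ⟨x, hxX, hAx, rfl⟩
  exact bound x u hAx (hX x hxX)

/-- Proposition 2 of the paper, second part.
Under KKT assumptions at the relaxation optimizer `x_R` with multipliers
`λ_A, λ_E ≥ 0`: every `x` with `A x = b + u`, `E x ≤ f₀`, `f(x) ≤ z_IP` satisfies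
`f(x) ≥ z_R − ‖λ_A‖‖u‖`; in particular the value function
`φ(u) = inf{f(x) : A x = b + u, E x ≤ f₀, x ∈ X}` is bounded below whenever the
feasible set is nonempty. -/
theorem value_function_bounded_below
    {n m p : ℕ}
    (f : EuclideanSpace ℝ (Fin n) → ℝ) (g : EuclideanSpace ℝ (Fin n) → EuclideanSpace ℝ (Fin n))
    (hconv : ∀ x y : EuclideanSpace ℝ (Fin n), f x + ⟪g x, y - x⟫ ≤ f y)
    (A : Matrix (Fin m) (Fin n) ℝ) (E : Matrix (Fin p) (Fin n) ℝ)
    (b : EuclideanSpace ℝ (Fin m)) (f₀ : Fin p → ℝ)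
    (X : Set (EuclideanSpace ℝ (Fin n)))
    (hX : ∀ x ∈ X, ∀ i, E.mulVec x i ≤ f₀ i)
    (xR : EuclideanSpace ℝ (Fin n)) (zR zIP : ℝ)
    (lamA : EuclideanSpace ℝ (Fin m)) (lamE : Fin p → ℝ)
    (hfeasA : toEuc (A.mulVec xR) = b)
    (hfeasE : ∀ i, E.mulVec xR i ≤ f₀ i)
    (hval : f xR = zR)
    (hstat : g xR = toEuc (A.transpose.mulVec lamA) - toEuc (E.transpose.mulVec lamE))
    (hcompE : lamE ⬝ᵥ (f₀ - E.mulVec xR) = 0)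
    (hcompA : lamA ⬝ᵥ (toEuc (A.mulVec xR) - b) = 0)
    (hlamE : ∀ i, 0 ≤ lamE i) :
    (∀ (x : EuclideanSpace ℝ (Fin n)) (u : EuclideanSpace ℝ (Fin m)),
        toEuc (A.mulVec x) = b + u → (∀ i, E.mulVec x i ≤ f₀ i) → f x ≤ zIP →
        zR - ‖lamA‖ * ‖u‖ ≤ f x) ∧
    (∀ u : EuclideanSpace ℝ (Fin m),
        (∃ x ∈ X, toEuc (A.mulVec x) = b + u) →
        BddBelow {w : ℝ | ∃ x ∈ X, toEuc (A.mulVec x) = b + u ∧ w = f x}) :=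
  value_function_bounded_below_general f g hconv A E b f₀ X hX xR zR zIP lamA lamE hfeasA hval hstat
    hcompE hlamE
end

section
/- Suppose φ : ℝᵐ → ℝ∪{+∞} with φ(0) finite, U = dom φ, and there exist δ > 0 and κ > 0 such that φ(0) ≤ φ(u) + κ‖u‖ for all u ∈ U with ‖u‖ ≤ δ. Further suppose there exist constants λ₀ ≥ 0 and z_R ≤ φ(0) such that for every ρ > λ₀, every u ∈ U with φ(u) + ρ‖u‖ ≤ φ(0) satisfies ‖u‖ ≤ (φ(0) − z_R)/(ρ − λ₀). Then for every ρ > max{κ, λ₀ + (φ(0) − z_R)/δ}, one has inf over u ∈ U of (φ(u) + ρ‖u‖) = φ(0). -/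
/-- Lemma 3 of the paper: exact-penalty transfer lemma.
`φ` is a value function with domain `U` (values of `φ` outside `U` are irrelevant),
`0 ∈ U`, satisfying a local calmness inequality near `0` and a constraint-violation
bound for sublevel perturbations.  Then for every sufficiently large penalty
parameter `ρ`, `inf_{u ∈ U} (φ(u) + ρ‖u‖) = φ(0)`. -/
theorem exact_penalty_transfer
    {m : ℕ} (U : Set (EuclideanSpace ℝ (Fin m)))
    (φ : EuclideanSpace ℝ (Fin m) → ℝ)
    (h0 : (0 : EuclideanSpace ℝ (Fin m)) ∈ U)
    (δ κ : ℝ) (hδ : 0 < δ) (hκ : 0 < κ)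
    (hcalm : ∀ u ∈ U, ‖u‖ ≤ δ → φ 0 ≤ φ u + κ * ‖u‖)
    (lam0 zR : ℝ) (hlam0 : 0 ≤ lam0) (hzR : zR ≤ φ 0)
    (hbound : ∀ ρ : ℝ, lam0 < ρ → ∀ u ∈ U, φ u + ρ * ‖u‖ ≤ φ 0 →
      ‖u‖ ≤ (φ 0 - zR) / (ρ - lam0)) :
    ∀ ρ : ℝ, max κ (lam0 + (φ 0 - zR) / δ) < ρ →
      sInf {z : ℝ | ∃ u ∈ U, z = φ u + ρ * ‖u‖} = φ 0 := by
  intro ρ hρ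
  have hκρ : κ < ρ := lt_of_le_of_lt (le_max_left _ _) hρ
  have hlρ : lam0 + (φ 0 - zR) / δ < ρ := lt_of_le_of_lt (le_max_right _ _) hρ
  have hlam0ρ : lam0 < ρ := by
    have : 0 ≤ (φ 0 - zR) / δ := div_nonneg (by linarith) hδ.le
    linarith
  -- lower bound
  have hlb : ∀ z ∈ {z : ℝ | ∃ u ∈ U, z = φ u + ρ * ‖u‖}, φ 0 ≤ z := by
    rintro z ⟨u, hu, rfl⟩
    by_contra h
    push_neg at h
    have hle : φ u + ρ * ‖u‖ ≤ φ 0 := h.le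
    have hb := hbound ρ hlam0ρ u hu hle
    have hub : ‖u‖ ≤ δ := by
      refine hb.trans ?_
      rw [div_le_iff₀ (by linarith)]
      nlinarith [div_nonneg (show (0:ℝ) ≤ φ 0 - zR by linarith) hδ.le,
        (div_le_iff₀ hδ).mp (le_refl ((φ 0 - zR) / δ))]
    have := hcalm u hu hub
    nlinarith [norm_nonneg u]
  have hmem : φ 0 ∈ {z : ℝ | ∃ u ∈ U, z = φ u + ρ * ‖u‖} := by
    exact ⟨0, h0, by simp⟩
  exact le_antisymm (csInf_le ⟨φ 0, hlb⟩ hmem) (le_csInf ⟨_, hmem⟩ hlb)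
end

section
/- Let f be convex differentiable with μ-strong convexity and L-smoothness, f(0) = 0, and let x* satisfy f(x*) ≤ z_IP. Then ‖∇f(x*)‖ ≤ L·(‖∇f(0)‖ + √(‖∇f(0)‖² + 2μ z_IP))/μ + ‖∇f(0)‖. -/
open scoped RealInnerProductSpace

/-- gradient bound at the optimum, used in Theorem 3.
If `f` is `μ`-strongly convex and `L`-smooth with gradient `g`, `f(0) = 0`,
and `f(x*) ≤ z_IP` with `z_IP ≥ 0`, then
`‖∇f(x*)‖ ≤ L(‖∇f(0)‖ + √(‖∇f(0)‖² + 2 μ z_IP))/μ + ‖∇f(0)‖`. -/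
theorem gradient_bound_at_optimum
    {n : ℕ} (f : EuclideanSpace ℝ (Fin n) → ℝ)
    (g : EuclideanSpace ℝ (Fin n) → EuclideanSpace ℝ (Fin n))
    (μ L : ℝ) (hμ : 0 < μ) (hL : 0 ≤ L)
    (hsc : ∀ x a : EuclideanSpace ℝ (Fin n),
      f a + ⟪g a, x - a⟫ + μ / 2 * ‖x - a‖ ^ 2 ≤ f x)
    (hsmooth : ∀ x y : EuclideanSpace ℝ (Fin n), ‖g x - g y‖ ≤ L * ‖x - y‖)
    (hf0 : f 0 = 0)
    (xstar : EuclideanSpace ℝ (Fin n)) (zIP : ℝ) (hzIP : 0 ≤ zIP)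
    (hopt : f xstar ≤ zIP) :
    ‖g xstar‖ ≤ L * (‖g 0‖ + Real.sqrt (‖g 0‖ ^ 2 + 2 * μ * zIP)) / μ + ‖g 0‖ := by
  set t := ‖xstar‖ with ht
  set b := ‖g 0‖ with hb
  have ht0 : 0 ≤ t := norm_nonneg _
  have hb0 : 0 ≤ b := norm_nonneg _
  have hs0 : 0 ≤ b ^ 2 + 2 * μ * zIP := by positivity
  set s := Real.sqrt (b ^ 2 + 2 * μ * zIP) with hsdef
  have hsnn : 0 ≤ s := Real.sqrt_nonneg _
  -- strong convexity at a = 0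
  have h1 := hsc xstar 0
  simp only [hf0, sub_zero, zero_add] at h1
  have hinner : -(b * t) ≤ ⟪g 0, xstar⟫ := by
    have := abs_real_inner_le_norm (g 0) xstar
    have h := neg_abs_le ⟪g 0, xstar⟫
    nlinarith [abs_nonneg ⟪g 0, xstar⟫]
  have hq : μ / 2 * t ^ 2 - b * t ≤ zIP := by nlinarith
  -- bound on t
  have htb : t ≤ (b + s) / μ := by
    rcases le_or_gt (μ * t) b with h | h
    · have : t ≤ b / μ := by
        rw [le_div_iff₀ hμ]; linarith [mul_comm μ t]
      calc t ≤ b / μ := this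
        _ ≤ (b + s) / μ := by gcongr; linarith
    · have hsq : (μ * t - b) ^ 2 ≤ b ^ 2 + 2 * μ * zIP := by nlinarith
      have : μ * t - b ≤ s := by
        calc μ * t - b ≤ |μ * t - b| := le_abs_self _
          _ = Real.sqrt ((μ * t - b) ^ 2) := (Real.sqrt_sq_eq_abs _).symm
          _ ≤ s := Real.sqrt_le_sqrt hsq
      rw [le_div_iff₀ hμ]
      linarith [mul_comm μ t]
  -- conclude
  have h2 : ‖g xstar‖ ≤ L * t + b := by
    calc ‖g xstar‖ ≤ ‖g xstar - g 0‖ + ‖g 0‖ := by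
          simpa using norm_add_le (g xstar - g 0) (g 0)
      _ ≤ L * ‖xstar - 0‖ + b := by linarith [hsmooth xstar 0]
      _ = L * t + b := by rw [sub_zero]
  have h3 : L * t ≤ L * ((b + s) / μ) := mul_le_mul_of_nonneg_left htb hL
  calc ‖g xstar‖ ≤ L * t + b := h2
    _ ≤ L * ((b + s) / μ) + b := by linarith
    _ = L * (b + s) / μ + b := by ring
end

section
/- Let Φ : ℝᵐ × S → ℝ ∪ {+∞} where S = {x⁽¹⁾,…,x⁽ᵏ⁾} is finite, each Φ(·, x⁽ⁱ⁾) is lower semicontinuous at 0, and φ̂(u) = minᵢ Φ(u, x⁽ⁱ⁾). Partition S into S₌ = { x ∈ S : Φ(0,x) = φ̂(0) } and S₍₎ = { x ∈ S : Φ(0,x) > φ̂(0) } (with Φ(0,x) possibly +∞). Then there exists δ > 0 such that for all u with ‖u‖ ≤ δ and φ̂(u) ≤ φ̂(0), one has φ̂(u) = min over x ∈ S₌ of Φ(u, x). -/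
/-- Lemma 8 of the paper.
Let `φ̂(u) = min_i Φ(u, i)` over a finite index set, each `Φ(·, i)` lower
semicontinuous at `0`, with `φ̂(0)` finite.  Then near `0`, on the sublevel region
`φ̂(u) ≤ φ̂(0)`, only the indices attaining `φ̂(0)` matter:
`φ̂(u) = min { Φ(u, i) : Φ(0, i) = φ̂(0) }`. -/
theorem sublevel_min_over_optimal_indices
    {m k : ℕ} (hk : 0 < k)
    (Φ : EuclideanSpace ℝ (Fin m) → Fin k → EReal)
    (hlsc : ∀ i : Fin k, LowerSemicontinuousAt (fun u => Φ u i) 0)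
    (hfin_top : (⨅ i : Fin k, Φ 0 i) ≠ ⊤)
    (hfin_bot : (⨅ i : Fin k, Φ 0 i) ≠ ⊥) :
    ∃ δ : ℝ, 0 < δ ∧ ∀ u : EuclideanSpace ℝ (Fin m), ‖u‖ ≤ δ →
      (⨅ i : Fin k, Φ u i) ≤ (⨅ i : Fin k, Φ 0 i) →
      (⨅ i : Fin k, Φ u i) =
        ⨅ i : {i : Fin k // Φ 0 i = ⨅ j : Fin k, Φ 0 j}, Φ u i := by
  haveI : Nonempty (Fin k) := ⟨⟨0, hk⟩⟩
  set φ0 := ⨅ i : Fin k, Φ 0 i with hφ0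
  have hev : ∀ᶠ u in nhds (0 : EuclideanSpace ℝ (Fin m)),
      ∀ i : Fin k, φ0 < Φ 0 i → φ0 < Φ u i := by
    rw [Filter.eventually_all]
    intro i
    by_cases h : φ0 < Φ 0 i
    · filter_upwards [hlsc i φ0 h] with u hu _
      exact hu
    · filter_upwards with u h'
      exact absurd h' h
  obtain ⟨ε, hε, hball⟩ := Metric.eventually_nhds_iff.mp hev
  refine ⟨ε / 2, by positivity, fun u hu hle => ?_⟩
  have hdist : dist u (0 : EuclideanSpace ℝ (Fin m)) < ε := by
    rw [dist_zero_right]; linarith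
  have hu' : ∀ i, φ0 < Φ 0 i → φ0 < Φ u i := hball hdist
  obtain ⟨i0, hi0⟩ := exists_eq_ciInf_of_finite (f := fun j => Φ u j)
  have hi0mem : Φ 0 i0 = φ0 := by
    by_contra hne
    have h1 : φ0 < Φ 0 i0 := lt_of_le_of_ne (iInf_le _ i0) (Ne.symm hne)
    have h2 : φ0 < Φ u i0 := hu' i0 h1
    have h3 : Φ u i0 ≤ φ0 := hi0 ▸ hle
    exact absurd h3 (not_le.mpr h2)
  apply le_antisymm
  · exact le_iInf fun i => iInf_le _ i.1
  · exact (iInf_le _ (⟨i0, hi0mem⟩ : {i : Fin k // Φ 0 i = ⨅ j : Fin k, Φ 0 j})).trans hi0.le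
end

section
/- Let f : ℝⁿ → ℝ be convex differentiable. Fix matrices A_C, E_C and vectors, and suppose for each j in a finite index set J there are points x_C^{0,j}, multipliers λ_A^{(j)}, λ_E^{(j)} ≥ 0 satisfying the KKT conditions ∇_C f(x_I^{(j)}, x_C^{0,j}) = A_Cᵀλ_A^{(j)} − E_Cᵀλ_E^{(j)}, complementary slackness, and attaining φ̂(0). Then for u close to 0 in the sublevel region with φ̂(u) attained by index j, one has φ̂(0) − φ̂(u) ≤ ‖λ_A^{(j)}‖·‖u‖; hence with Γ = max_j ‖λ_A^{(j)}‖, φ̂(0) − φ̂(u) ≤ Γ‖u‖ for all such u. -/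
open scoped RealInnerProductSpace Matrix

/-!
Convexity gives `f x ≥ f x₀ + ⟪∇f x₀, x - x₀⟫`. Substituting the stationarity condition
`∇f x₀ = A_Cᵀ λ_A - E_Cᵀ λ_E`, the equality constraints turn the first term into `λ_A ⬝ᵥ u`,
while `λ_E ≥ 0` and complementary slackness make the second term favourable. Hence
`φ̂(0) - f x ≤ -λ_A ⬝ᵥ u ≤ ‖λ_A‖ ‖u‖` by Cauchy–Schwarz, and the uniform bound takes the
maximum over the finitely many indices.
-/

lemma inner_toEuc_transpose_mulVec {m n : ℕ} (M : Matrix (Fin m) (Fin n) ℝ) (l : Fin m → ℝ)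
    (d : EuclideanSpace ℝ (Fin n)) : ⟪toEuc (Mᵀ *ᵥ l), d⟫ = l ⬝ᵥ (M *ᵥ d.ofLp) := by
  rw [EuclideanSpace.inner_eq_star_dotProduct, star_trivial, dotProduct_comm,
    Matrix.mulVec_transpose]
  exact Matrix.dotProduct_mulVec l M d.ofLp |>.symm

lemma dotProduct_sub_nonpos_of_complementary_slackness {ι R : Type*} [Fintype ι]
    [Ring R] [PartialOrder R] [IsOrderedRing R] {lam c y y₀ : ι → R}
    (hlam : 0 ≤ lam) (hy : y ≤ c) (hcomp : lam ⬝ᵥ (c - y₀) = 0) :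
    lam ⬝ᵥ (y - y₀) ≤ 0 := by
  rw [dotProduct_sub, sub_eq_zero] at hcomp
  rw [dotProduct_sub, sub_nonpos, ← hcomp]
  exact dotProduct_le_dotProduct_of_nonneg_left hy hlam

theorem sub_le_norm_mul_norm_of_kkt {nC m p : ℕ}
    {f : EuclideanSpace ℝ (Fin nC) → ℝ} {g : EuclideanSpace ℝ (Fin nC) → EuclideanSpace ℝ (Fin nC)}
    (hconv : ∀ x y, f x + ⟪g x, y - x⟫ ≤ f y)
    {AC : Matrix (Fin m) (Fin nC) ℝ} {EC : Matrix (Fin p) (Fin nC) ℝ}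
    {b : EuclideanSpace ℝ (Fin m)} {f₀ : Fin p → ℝ} {x₀ : EuclideanSpace ℝ (Fin nC)}
    {lamA : EuclideanSpace ℝ (Fin m)} {lamE : Fin p → ℝ}
    (hfeas : toEuc (AC *ᵥ x₀.ofLp) = b)
    (hstat : g x₀ = toEuc (ACᵀ *ᵥ lamA.ofLp) - toEuc (ECᵀ *ᵥ lamE))
    (hcomp : lamE ⬝ᵥ (f₀ - EC *ᵥ x₀.ofLp) = 0) (hlamE : 0 ≤ lamE)
    {u : EuclideanSpace ℝ (Fin m)} {x : EuclideanSpace ℝ (Fin nC)}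
    (hA : toEuc (AC *ᵥ x.ofLp) = b + u) (hE : EC *ᵥ x.ofLp ≤ f₀) :
    f x₀ - f x ≤ ‖lamA‖ * ‖u‖ := by
  have hAu : AC *ᵥ (x - x₀).ofLp = u.ofLp := by
    subst hfeas
    have hAx := congrArg WithLp.ofLp hA
    simp only [toEuc, WithLp.ofLp_add, WithLp.ofLp_toLp] at hAx
    rw [WithLp.ofLp_sub, Matrix.mulVec_sub, hAx, add_sub_cancel_left]
  have hEterm : lamE ⬝ᵥ (EC *ᵥ (x - x₀).ofLp) ≤ 0 := by
    rw [WithLp.ofLp_sub, Matrix.mulVec_sub]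
    exact dotProduct_sub_nonpos_of_complementary_slackness hlamE hE hcomp
  have hgrad : ⟪g x₀, x - x₀⟫ = ⟪lamA, u⟫ - lamE ⬝ᵥ (EC *ᵥ (x - x₀).ofLp) := by
    rw [hstat, inner_sub_left, inner_toEuc_transpose_mulVec, inner_toEuc_transpose_mulVec, hAu,
      dotProduct_comm, EuclideanSpace.inner_eq_star_dotProduct, star_trivial]
  have hCS : -‖lamA‖ * ‖u‖ ≤ ⟪lamA, u⟫ := by
    rw [neg_mul]
    exact neg_le_of_abs_le (abs_real_inner_le_norm lamA u)
  linarith [hconv x₀ x]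

theorem value_function_calmness_general
    {nC m p k : ℕ} (hk : 0 < k)
    (f : Fin k → EuclideanSpace ℝ (Fin nC) → ℝ)
    (g : Fin k → EuclideanSpace ℝ (Fin nC) → EuclideanSpace ℝ (Fin nC))
    (hconv : ∀ j, ∀ x y : EuclideanSpace ℝ (Fin nC), f j x + ⟪g j x, y - x⟫ ≤ f j y)
    (AC : Matrix (Fin m) (Fin nC) ℝ) (EC : Matrix (Fin p) (Fin nC) ℝ)
    (b : Fin k → EuclideanSpace ℝ (Fin m)) (f₀ : Fin k → Fin p → ℝ)
    (x0 : Fin k → EuclideanSpace ℝ (Fin nC))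
    (lamA : Fin k → EuclideanSpace ℝ (Fin m)) (lamE : Fin k → Fin p → ℝ)
    (φ0 : ℝ)
    -- feasibility of each `x0 j` at `u = 0`
    (hfeasA : ∀ j, toEuc (AC.mulVec (x0 j)) = b j)
    -- each `x0 j` attains the common optimal value `φ̂(0)`
    (hval : ∀ j, f j (x0 j) = φ0)
    -- KKT conditions at `u = 0` for each `j`
    (hstat : ∀ j, g j (x0 j) =
      toEuc (AC.transpose.mulVec (lamA j)) - toEuc (EC.transpose.mulVec (lamE j)))
    (hcomp : ∀ j, lamE j ⬝ᵥ (f₀ j - EC.mulVec (x0 j)) = 0)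
    (hlamE : ∀ j i, 0 ≤ lamE j i) :
    ∀ (u : EuclideanSpace ℝ (Fin m)) (j : Fin k) (x : EuclideanSpace ℝ (Fin nC)),
      toEuc (AC.mulVec x) = b j + u → (∀ i, EC.mulVec x i ≤ f₀ j i) →
      φ0 - f j x ≤ ‖lamA j‖ * ‖u‖ ∧
      φ0 - f j x ≤
        (Finset.univ.sup' (@Finset.univ_nonempty (Fin k) _ ⟨⟨0, hk⟩⟩)
          (fun j' => ‖lamA j'‖)) * ‖u‖ := by
  intro u j x hA hE
  have hj : φ0 - f j x ≤ ‖lamA j‖ * ‖u‖ := hval j ▸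
    sub_le_norm_mul_norm_of_kkt (hconv j) (hfeasA j) (hstat j) (hcomp j) (hlamE j) hA hE
  refine ⟨hj, hj.trans ?_⟩
  gcongr
  exact Finset.le_sup' (fun j' => ‖lamA j'‖) (Finset.mem_univ j)

/-- Lemma 9 of the paper: calmness of the MICP value function.
For each index `j` in a finite set, `f j` is convex differentiable (gradient `g j`),
`x0 j` is feasible for the continuous restriction at `u = 0` with KKT multipliers
`lamA j`, `lamE j ≥ 0` and attains the common optimal value `φ0 = φ̂(0)`.
Then for every perturbation `u` and every `x` feasible for index `j` at `u`
(in particular for an optimizer attaining `φ̂(u)`), one has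
`φ̂(0) − f j x ≤ ‖lamA j‖·‖u‖`, and hence with `Γ = max_j ‖lamA j‖`,
`φ̂(0) − f j x ≤ Γ‖u‖`. -/
theorem value_function_calmness
    {nC m p k : ℕ} (hk : 0 < k)
    (f : Fin k → EuclideanSpace ℝ (Fin nC) → ℝ)
    (g : Fin k → EuclideanSpace ℝ (Fin nC) → EuclideanSpace ℝ (Fin nC))
    (hconv : ∀ j, ∀ x y : EuclideanSpace ℝ (Fin nC), f j x + ⟪g j x, y - x⟫ ≤ f j y)
    (AC : Matrix (Fin m) (Fin nC) ℝ) (EC : Matrix (Fin p) (Fin nC) ℝ)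
    (b : Fin k → EuclideanSpace ℝ (Fin m)) (f₀ : Fin k → Fin p → ℝ)
    (x0 : Fin k → EuclideanSpace ℝ (Fin nC))
    (lamA : Fin k → EuclideanSpace ℝ (Fin m)) (lamE : Fin k → Fin p → ℝ)
    (φ0 : ℝ)
    -- feasibility of each `x0 j` at `u = 0`
    (hfeasA : ∀ j, toEuc (AC.mulVec (x0 j)) = b j)
    (hfeasE : ∀ j i, EC.mulVec (x0 j) i ≤ f₀ j i)
    -- each `x0 j` attains the common optimal value `φ̂(0)`
    (hval : ∀ j, f j (x0 j) = φ0)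
    (hopt : ∀ j, ∀ x : EuclideanSpace ℝ (Fin nC),
      toEuc (AC.mulVec x) = b j → (∀ i, EC.mulVec x i ≤ f₀ j i) → φ0 ≤ f j x)
    -- KKT conditions at `u = 0` for each `j`
    (hstat : ∀ j, g j (x0 j) =
      toEuc (AC.transpose.mulVec (lamA j)) - toEuc (EC.transpose.mulVec (lamE j)))
    (hcomp : ∀ j, lamE j ⬝ᵥ (f₀ j - EC.mulVec (x0 j)) = 0)
    (hlamE : ∀ j i, 0 ≤ lamE j i) :
    ∀ (u : EuclideanSpace ℝ (Fin m)) (j : Fin k) (x : EuclideanSpace ℝ (Fin nC)),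
      toEuc (AC.mulVec x) = b j + u → (∀ i, EC.mulVec x i ≤ f₀ j i) →
      φ0 - f j x ≤ ‖lamA j‖ * ‖u‖ ∧
      φ0 - f j x ≤
        (Finset.univ.sup' (@Finset.univ_nonempty (Fin k) _ ⟨⟨0, hk⟩⟩)
          (fun j' => ‖lamA j'‖)) * ‖u‖ :=
  value_function_calmness_general hk f g hconv AC EC b f₀ x0 lamA lamE φ0 hfeasA hval hstat hcomp
    hlamE
end

section
/- Under the hypotheses of the previous statement, if moreover the recession cone of f and the cone rec(F_R) = { x : E x ≤ 0, A x = 0 } intersect only in {0}, then the set S = { x : E x ≤ f₀, f(x) + λ_Aᵀ(b − A x) + ρψ(b − A x) ≤ z_IP } is compact, for each ρ > 0. -/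
open scoped RealInnerProductSpace Matrix

open Filter Topology

/-- Recession cone of a (convex) function `f`: the common recession cone of its
sublevel sets, i.e. directions along which `f` is nonincreasing. -/
def recFun {n : ℕ} (f : EuclideanSpace ℝ (Fin n) → ℝ) : Set (EuclideanSpace ℝ (Fin n)) :=
  {d | ∀ x, ∀ t : ℝ, 0 ≤ t → f (x + t • d) ≤ f x}

lemma inner_eq_dot {m : ℕ} (u v : EuclideanSpace ℝ (Fin m)) : ⟪u, v⟫ = u ⬝ᵥ v := by
  simp [PiLp.inner_apply, RCLike.inner_apply, dotProduct, mul_comm]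

lemma transpose_dot {m n : ℕ} (A : Matrix (Fin m) (Fin n) ℝ) (lam : Fin m → ℝ) (w : Fin n → ℝ) :
    A.transpose.mulVec lam ⬝ᵥ w = lam ⬝ᵥ A.mulVec w := by
  rw [Matrix.mulVec_transpose, ← Matrix.dotProduct_mulVec]

lemma inner_transpose {m n : ℕ} (A : Matrix (Fin m) (Fin n) ℝ)
    (lam : EuclideanSpace ℝ (Fin m)) (w : EuclideanSpace ℝ (Fin n)) :
    ⟪toEuc (A.transpose.mulVec lam), w⟫ = ⟪lam, toEuc (A.mulVec w)⟫ := by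
  rw [inner_eq_dot, inner_eq_dot]
  simp only [toEuc, WithLp.ofLp_toLp]
  exact transpose_dot A lam w

/-- The linear map `x ↦ A x` on Euclidean space. -/
def matLin {m n : ℕ} (A : Matrix (Fin m) (Fin n) ℝ) :
    EuclideanSpace ℝ (Fin n) →ₗ[ℝ] EuclideanSpace ℝ (Fin m) where
  toFun x := toEuc (A.mulVec x)
  map_add' x y := by
    ext i
    simp only [toEuc, WithLp.ofLp_toLp, WithLp.ofLp_add, Pi.add_apply, Matrix.mulVec, dotProduct, PiLp.add_apply, mul_add,
      Finset.sum_add_distrib]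
  map_smul' c x := by
    ext i
    simp only [toEuc, WithLp.ofLp_toLp, WithLp.ofLp_smul, Pi.smul_apply, Matrix.mulVec, dotProduct, PiLp.smul_apply, smul_eq_mul,
      Finset.mul_sum, RingHom.id_apply]
    exact Finset.sum_congr rfl fun j _ => by ring

lemma matLin_cont {m n : ℕ} (A : Matrix (Fin m) (Fin n) ℝ) :
    Continuous fun x : EuclideanSpace ℝ (Fin n) => toEuc (A.mulVec x) :=
  (matLin A).continuous_of_finiteDimensional

lemma mulVec_comp_cont {p n : ℕ} (E : Matrix (Fin p) (Fin n) ℝ) (i : Fin p) :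
    Continuous fun x : EuclideanSpace ℝ (Fin n) => E.mulVec x i := by
  have : (fun x : EuclideanSpace ℝ (Fin n) => E.mulVec x i)
      = fun x : EuclideanSpace ℝ (Fin n) => toEuc (E.mulVec x) i := rfl
  rw [this]
  exact (EuclideanSpace.proj i).continuous.comp (matLin_cont E)

/-- Convexity from the subgradient inequality. -/
lemma convex_of_subgrad {n : ℕ} {f : EuclideanSpace ℝ (Fin n) → ℝ}
    {g : EuclideanSpace ℝ (Fin n) → EuclideanSpace ℝ (Fin n)}
    (hconv : ∀ x y : EuclideanSpace ℝ (Fin n), f x + ⟪g x, y - x⟫ ≤ f y)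
    (a c : EuclideanSpace ℝ (Fin n)) (θ : ℝ) (h0 : 0 ≤ θ) (h1 : θ ≤ 1) :
    f (a + θ • (c - a)) ≤ (1 - θ) * f a + θ * f c := by
  set z := a + θ • (c - a) with hz
  have h₁ := hconv z a
  have h₂ := hconv z c
  have key : (1 - θ) * ⟪g z, a - z⟫ + θ * ⟪g z, c - z⟫ = 0 := by
    rw [← real_inner_smul_right, ← real_inner_smul_right, ← inner_add_right]
    have h0' : (1 - θ) • (a - z) + θ • (c - z) = 0 := by
      rw [hz]; module
    rw [h0', inner_zero_right]
  nlinarith [mul_le_mul_of_nonneg_left h₁ (sub_nonneg.2 h1),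
    mul_le_mul_of_nonneg_left h₂ h0]

/-- Lemma 10 of the paper.
Under the hypotheses of Statement 15, if moreover `rec(f) ∩ rec(F_R) = {0}`
(where `rec(F_R) = {x : A x = 0, E x ≤ 0}`), then for each `ρ > 0` the
augmented-Lagrangian sublevel set
`S = {x : E x ≤ f₀, f(x) + λ_Aᵀ(b − A x) + ρ ψ(b − A x) ≤ z_IP}` is compact. -/
theorem augmented_sublevel_compact
    {n m p : ℕ}
    (f : EuclideanSpace ℝ (Fin n) → ℝ)
    (g : EuclideanSpace ℝ (Fin n) → EuclideanSpace ℝ (Fin n))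
    (hconv : ∀ x y : EuclideanSpace ℝ (Fin n), f x + ⟪g x, y - x⟫ ≤ f y)
    (hcont : Continuous f)
    (A : Matrix (Fin m) (Fin n) ℝ) (E : Matrix (Fin p) (Fin n) ℝ)
    (b : EuclideanSpace ℝ (Fin m)) (f₀ : Fin p → ℝ)
    (xR : EuclideanSpace ℝ (Fin n)) (zR zIP : ℝ)
    (lamA : EuclideanSpace ℝ (Fin m)) (lamE : Fin p → ℝ)
    (hfeasA : toEuc (A.mulVec xR) = b)
    (hfeasE : ∀ i, E.mulVec xR i ≤ f₀ i)
    (hval : f xR = zR)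
    (hstat : g xR = toEuc (A.transpose.mulVec lamA) - toEuc (E.transpose.mulVec lamE))
    (hcompE : lamE ⬝ᵥ (f₀ - E.mulVec xR) = 0)
    (hcompA : lamA ⬝ᵥ (toEuc (A.mulVec xR) - b) = 0)
    (hlamE : ∀ i, 0 ≤ lamE i)
    (hzIP : zR ≤ zIP)
    (ψ : EuclideanSpace ℝ (Fin m) → ℝ)
    (hψ0 : ψ 0 = 0) (hψpos : ∀ u : EuclideanSpace ℝ (Fin m), u ≠ 0 → 0 < ψ u)
    (hψnonneg : ∀ u, 0 ≤ ψ u)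
    (hψlsc : LowerSemicontinuous ψ)
    (hψbdd : ∀ δ : ℝ, 0 < δ → Bornology.IsBounded {u : EuclideanSpace ℝ (Fin m) | ψ u ≤ δ})
    (hψdiam : ∀ ε : ℝ, 0 < ε → ∃ δ : ℝ, 0 < δ ∧
      ∀ u : EuclideanSpace ℝ (Fin m), ψ u ≤ δ → ‖u‖ ≤ ε)
    -- trivial common recession directions
    (hrec : recFun f ∩
      {x : EuclideanSpace ℝ (Fin n) | toEuc (A.mulVec x) = 0 ∧ ∀ i, E.mulVec x i ≤ 0}
      = {0})
    (ρ : ℝ) (hρ : 0 < ρ) :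
    IsCompact {x : EuclideanSpace ℝ (Fin n) | (∀ i, E.mulVec x i ≤ f₀ i) ∧
      f x + ⟪lamA, b - toEuc (A.mulVec x)⟫ + ρ * ψ (b - toEuc (A.mulVec x)) ≤ zIP} := by
  set S : Set (EuclideanSpace ℝ (Fin n)) :=
    {x | (∀ i, E.mulVec x i ≤ f₀ i) ∧
      f x + ⟪lamA, b - toEuc (A.mulVec x)⟫ + ρ * ψ (b - toEuc (A.mulVec x)) ≤ zIP} with hSdef
  have hAff : Continuous fun x : EuclideanSpace ℝ (Fin n) => b - toEuc (A.mulVec x) :=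
    continuous_const.sub (matLin_cont A)
  -- Step 0: key lower bound from KKT: on the E-feasible set, f x + ⟪λ_A, b - A x⟫ ≥ zR
  have hlow : ∀ y : EuclideanSpace ℝ (Fin n), (∀ i, E.mulVec y i ≤ f₀ i) →
      zR ≤ f y + ⟪lamA, b - toEuc (A.mulVec y)⟫ := by
    intro y hy
    have h1 := hconv xR y
    have e1 : ⟪g xR, y - xR⟫
        = (⟪lamA, toEuc (A.mulVec y)⟫ - ⟪lamA, toEuc (A.mulVec xR)⟫)
          - (lamE ⬝ᵥ E.mulVec y - lamE ⬝ᵥ E.mulVec xR) := by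
      rw [hstat, inner_sub_left, inner_sub_right, inner_sub_right,
        inner_transpose, inner_transpose, inner_transpose, inner_transpose]
      simp only [inner_eq_dot, toEuc, WithLp.ofLp_toLp]
    have e2 : ⟪lamA, b - toEuc (A.mulVec y)⟫
        = ⟪lamA, b⟫ - ⟪lamA, toEuc (A.mulVec y)⟫ := inner_sub_right _ _ _
    have e3 : ⟪lamA, toEuc (A.mulVec xR)⟫ = ⟪lamA, b⟫ := by rw [hfeasA]
    have e4 : lamE ⬝ᵥ E.mulVec xR = lamE ⬝ᵥ f₀ := by
      have h := hcompE
      rw [dotProduct_sub, sub_eq_zero] at h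
      exact h.symm
    have e5 : 0 ≤ lamE ⬝ᵥ f₀ - lamE ⬝ᵥ E.mulVec y := by
      rw [← dotProduct_sub]
      exact Finset.sum_nonneg fun i _ => mul_nonneg (hlamE i) (sub_nonneg.2 (hy i))
    rw [e1, hval, e3, e4] at h1
    rw [e2]
    linarith
  rw [Metric.isCompact_iff_isClosed_bounded]
  constructor
  · -- closedness
    have hS2 : IsClosed {x : EuclideanSpace ℝ (Fin n) |
        f x + ⟪lamA, b - toEuc (A.mulVec x)⟫ + ρ * ψ (b - toEuc (A.mulVec x)) ≤ zIP} := by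
      have hc1 : Continuous fun x : EuclideanSpace ℝ (Fin n) =>
          f x + ⟪lamA, b - toEuc (A.mulVec x)⟫ :=
        hcont.add (continuous_const.inner hAff)
      have hρψ : LowerSemicontinuous fun u : EuclideanSpace ℝ (Fin m) => ρ * ψ u := by
        intro u y hy
        have hy' : y / ρ < ψ u := (div_lt_iff₀' hρ).2 hy
        filter_upwards [hψlsc u (y / ρ) hy'] with z hz
        exact (div_lt_iff₀' hρ).1 hz
      have hlsc : LowerSemicontinuous fun x : EuclideanSpace ℝ (Fin n) =>
          f x + ⟪lamA, b - toEuc (A.mulVec x)⟫ + ρ * ψ (b - toEuc (A.mulVec x)) :=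
        hc1.lowerSemicontinuous.add (by have := LowerSemicontinuous.comp hρψ hAff; exact this)
      have hopen := (lowerSemicontinuous_iff_isOpen_preimage.1 hlsc) zIP
      have hcl : IsClosed ((fun x : EuclideanSpace ℝ (Fin n) =>
          f x + ⟪lamA, b - toEuc (A.mulVec x)⟫ + ρ * ψ (b - toEuc (A.mulVec x))) ⁻¹'
          (Set.Ioi zIP))ᶜ := hopen.isClosed_compl
      convert hcl using 1
      ext x
      simp [not_lt]
    have hS1 : IsClosed {x : EuclideanSpace ℝ (Fin n) | ∀ i, E.mulVec x i ≤ f₀ i} := by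
      have h : {x : EuclideanSpace ℝ (Fin n) | ∀ i, E.mulVec x i ≤ f₀ i}
          = ⋂ i, {x : EuclideanSpace ℝ (Fin n) | E.mulVec x i ≤ f₀ i} := by ext x; simp only [Set.mem_setOf_eq, Set.mem_iInter]
      rw [h]
      exact isClosed_iInter fun i => isClosed_le (mulVec_comp_cont E i) continuous_const
    have hSeq : S = {x : EuclideanSpace ℝ (Fin n) | ∀ i, E.mulVec x i ≤ f₀ i} ∩
        {x | f x + ⟪lamA, b - toEuc (A.mulVec x)⟫ + ρ * ψ (b - toEuc (A.mulVec x)) ≤ zIP} := by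
      ext x; simp [hSdef, Set.mem_setOf_eq, Set.mem_inter_iff]
    rw [hSeq]
    exact hS1.inter hS2
  · -- boundedness
    by_contra hub
    rw [isBounded_iff_forall_norm_le] at hub
    push_neg at hub
    choose x hxS hxn using fun k : ℕ => hub k
    simp only [hSdef, Set.mem_setOf_eq] at hxS
    have hxpos : ∀ k : ℕ, 0 < ‖x k‖ := fun k =>
      lt_of_le_of_lt (Nat.cast_nonneg k) (hxn k)
    set u : ℕ → EuclideanSpace ℝ (Fin n) := fun k => ‖x k‖⁻¹ • x k with hu
    have husph : ∀ k, u k ∈ Metric.sphere (0 : EuclideanSpace ℝ (Fin n)) 1 := by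
      intro k
      simp only [Metric.mem_sphere, dist_zero_right, hu, norm_smul, norm_inv, norm_norm]
      exact inv_mul_cancel₀ (hxpos k).ne'
    obtain ⟨d, hdsph, φ, hφ, hud⟩ :=
      (isCompact_sphere (0 : EuclideanSpace ℝ (Fin n)) 1).tendsto_subseq husph
    have hdnorm : ‖d‖ = 1 := by simpa [dist_zero_right] using hdsph
    -- ψ bound along the sequence
    have hψle : ∀ k, ψ (b - toEuc (A.mulVec (x k))) ≤ (zIP - zR) / ρ := by
      intro k
      have h1 := (hxS k).2
      have h2 := hlow (x k) (hxS k).1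
      rw [le_div_iff₀ hρ]
      linarith
    have hq : 0 ≤ (zIP - zR) / ρ := div_nonneg (by linarith) hρ.le
    obtain ⟨C, hC⟩ :=
      isBounded_iff_forall_norm_le.1 (hψbdd ((zIP - zR) / ρ + 1) (by linarith))
    have hCb : ∀ k, ‖b - toEuc (A.mulVec (x k))‖ ≤ C := by
      intro k
      exact hC _ (by simp only [Set.mem_setOf_eq]; linarith [hψle k])
    have hAxb : ∀ k, ‖toEuc (A.mulVec (x k))‖ ≤ C + ‖b‖ := by
      intro k
      calc ‖toEuc (A.mulVec (x k))‖
          = ‖b - (b - toEuc (A.mulVec (x k)))‖ := by rw [sub_sub_cancel]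
        _ ≤ ‖b‖ + ‖b - toEuc (A.mulVec (x k))‖ := norm_sub_le _ _
        _ ≤ ‖b‖ + C := by linarith [hCb k]
        _ = C + ‖b‖ := by ring
    -- f bound along the sequence
    set M : ℝ := zIP + ‖lamA‖ * C with hM
    have hfM : ∀ k, f (x k) ≤ M := by
      intro k
      have h1 := (hxS k).2
      have h2 : |⟪lamA, b - toEuc (A.mulVec (x k))⟫| ≤ ‖lamA‖ * C := by
        calc |⟪lamA, b - toEuc (A.mulVec (x k))⟫|
            ≤ ‖lamA‖ * ‖b - toEuc (A.mulVec (x k))‖ := abs_real_inner_le_norm _ _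
          _ ≤ ‖lamA‖ * C := by
            have h3 := hCb k
            have h0 : (0:ℝ) ≤ ‖lamA‖ := norm_nonneg _
            nlinarith
      have h3 : 0 ≤ ρ * ψ (b - toEuc (A.mulVec (x k))) := mul_nonneg hρ.le (hψnonneg _)
      have h4 := abs_le.1 h2
      simp only [hM]
      linarith [h4.1]
    -- norms along the subsequence go to infinity
    have hnt : Tendsto (fun k => ‖x (φ k)‖) atTop atTop := by
      apply tendsto_atTop_mono (fun k => ?_) tendsto_natCast_atTop_atTop
      calc (k : ℝ) ≤ (φ k : ℝ) := Nat.cast_le.2 hφ.le_apply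
        _ ≤ ‖x (φ k)‖ := (hxn (φ k)).le
    have hinv : Tendsto (fun k => ‖x (φ k)‖⁻¹) atTop (𝓝 0) := hnt.inv_tendsto_atTop
    -- A d = 0
    have hAd : toEuc (A.mulVec d) = 0 := by
      have t1 : Tendsto (fun k => toEuc (A.mulVec (u (φ k)))) atTop
          (𝓝 (toEuc (A.mulVec d))) := ((matLin_cont A).tendsto d).comp hud
      have t2 : Tendsto (fun k => toEuc (A.mulVec (u (φ k)))) atTop (𝓝 0) := by
        apply squeeze_zero_norm (a := fun k => (C + ‖b‖) * ‖x (φ k)‖⁻¹)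
        · intro k
          have he : toEuc (A.mulVec (u (φ k)))
              = ‖x (φ k)‖⁻¹ • toEuc (A.mulVec (x (φ k))) := by
            simp only [hu]
            exact (matLin A).map_smul _ _
          rw [he, norm_smul, norm_inv, norm_norm, mul_comm]
          exact mul_le_mul_of_nonneg_right (hAxb (φ k)) (inv_nonneg.2 (norm_nonneg _))
        · have := hinv.const_mul (C + ‖b‖)
          simpa using this
      exact tendsto_nhds_unique t1 t2
    -- E d ≤ 0
    have hEd : ∀ i, E.mulVec d i ≤ 0 := by
      intro i
      have t1 : Tendsto (fun k => E.mulVec (u (φ k)) i) atTop (𝓝 (E.mulVec d i)) :=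
        ((mulVec_comp_cont E i).tendsto d).comp hud
      have t2 : Tendsto (fun k => ‖x (φ k)‖⁻¹ * f₀ i) atTop (𝓝 0) := by
        have := hinv.mul_const (f₀ i)
        simpa using this
      refine le_of_tendsto_of_tendsto t1 t2 (Eventually.of_forall fun k => ?_)
      show E.mulVec (u (φ k)) i ≤ ‖x (φ k)‖⁻¹ * f₀ i
      have he : E.mulVec (u (φ k)) i = ‖x (φ k)‖⁻¹ * E.mulVec (x (φ k)) i := by
        have h := (matLin E).map_smul (‖x (φ k)‖⁻¹) (x (φ k))
        have h2 : (matLin E) (‖x (φ k)‖⁻¹ • x (φ k)) i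
            = (‖x (φ k)‖⁻¹ • (matLin E) (x (φ k))) i := by rw [h]
        rw [PiLp.smul_apply, smul_eq_mul] at h2
        simpa only [hu, matLin, toEuc, LinearMap.coe_mk, AddHom.coe_mk] using h2
      rw [he]
      exact mul_le_mul_of_nonneg_left ((hxS (φ k)).1 i) (inv_nonneg.2 (norm_nonneg _))
    -- d is a recession direction of f
    have hrecd : d ∈ recFun f := by
      intro y t ht
      rcases eq_or_lt_of_le ht with h | htpos
      · simp [← h]
      set s : ℕ → ℝ := fun k => t * ‖x (φ k)‖⁻¹ with hs
      have hs0 : Tendsto s atTop (𝓝 0) := by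
        have := hinv.const_mul t
        simpa [hs] using this
      have hev : ∀ᶠ k in atTop, s k ≤ 1 := by
        filter_upwards [hnt.eventually_ge_atTop t] with k hk
        simp only [hs]
        calc t * ‖x (φ k)‖⁻¹ ≤ ‖x (φ k)‖ * ‖x (φ k)‖⁻¹ :=
            mul_le_mul_of_nonneg_right hk (inv_nonneg.2 (norm_nonneg _))
          _ = 1 := mul_inv_cancel₀ (hxpos (φ k)).ne'
      have hsnn : ∀ k, 0 ≤ s k := fun k => mul_nonneg ht (inv_nonneg.2 (norm_nonneg _))
      have hpt : ∀ k, y + s k • (x (φ k) - y) = y + t • u (φ k) - s k • y := by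
        intro k
        have hsx : s k • x (φ k) = t • u (φ k) := by
          simp only [hs, hu, smul_smul]
        rw [smul_sub, hsx]
        abel
      have t1 : Tendsto (fun k => y + s k • (x (φ k) - y)) atTop (𝓝 (y + t • d)) := by
        simp only [hpt]
        have l1 : Tendsto (fun k => y + t • u (φ k)) atTop (𝓝 (y + t • d)) :=
          tendsto_const_nhds.add (hud.const_smul t)
        have l2 : Tendsto (fun k => s k • y) atTop (𝓝 ((0:ℝ) • y)) :=
          hs0.smul tendsto_const_nhds
        have := l1.sub l2
        simpa using this
      have t2 : Tendsto (fun k => f (y + s k • (x (φ k) - y))) atTop (𝓝 (f (y + t • d))) :=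
        (hcont.tendsto _).comp t1
      have t3 : Tendsto (fun k => (1 - s k) * f y + s k * M) atTop (𝓝 (f y)) := by
        have l1 : Tendsto (fun k => (1 - s k) * f y) atTop (𝓝 ((1 - 0) * f y)) :=
          (tendsto_const_nhds.sub hs0).mul_const (f y)
        have l2 : Tendsto (fun k => s k * M) atTop (𝓝 (0 * M)) := hs0.mul_const M
        have := l1.add l2
        simpa using this
      refine le_of_tendsto_of_tendsto t2 t3 ?_
      filter_upwards [hev] with k hk
      show f (y + s k • (x (φ k) - y)) ≤ (1 - s k) * f y + s k * M
      calc f (y + s k • (x (φ k) - y)) ≤ (1 - s k) * f y + s k * f (x (φ k)) :=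
          convex_of_subgrad hconv y (x (φ k)) (s k) (hsnn k) hk
        _ ≤ (1 - s k) * f y + s k * M :=
          add_le_add_right (mul_le_mul_of_nonneg_left (hfM (φ k)) (hsnn k)) _
    -- contradiction
    have hd0 : d ∈ recFun f ∩
        {x : EuclideanSpace ℝ (Fin n) | toEuc (A.mulVec x) = 0 ∧ ∀ i, E.mulVec x i ≤ 0} :=
      ⟨hrecd, hAd, hEd⟩
    rw [hrec, Set.mem_singleton_iff] at hd0
    rw [hd0] at hdnorm
    simp at hdnorm
end
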